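/- Let c, k, and l be integers with 0 <= l < C(c,2) + c, and let R be a positive integer such that every coloring of the edges of a complete graph on R vertices with at most 4 colors admits a monochromatic complete subgraph on 3k vertices. Let G be a graph, and let X = (X1, X2, ..., X_R) be a c-uniform chain of length R in G such that the first l pairs in {(j1,j2) : 1 <= j1 <= j2 <= c} with respect to the lexicographic order are fixed with respect to X and G. Then there exist a graph G~ and a subchain Y of X of length k such that G~ is obtained from G by applying local complementations at vertices in V(X) minus V(Y), and the first l+1 pairs in the lexicographic order are fixed with respect to Y and G~. -/

import Mathlib

/-!
Let `(j₁, j₂)` be the `l`-th pair. Colour a pair of parts `x < y` by whether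
`X x j₁ ~ X y j₂` and whether `X y j₁ ~ X x j₂`; Ramsey's theorem gives `3k` parts on which both
relations are constant. If neither holds, the pair is already fixed. If both hold, one local
complementation at a vertex of column `j₁` (when `j₁ = j₂`, the column is a clique) or one pivot on
an edge between columns `j₁` and `j₂` removes all these edges. If exactly one holds, then `j₁ < j₂`
and, after possibly reversing the order of the parts, the edges form a half graph; pivoting in
turn on the edges between parts `3r` and `3r + 2` for `r < k` clears the parts `3r + 1`.
Earlier pairs stay fixed because every vertex used lies in column `j₁` or `j₂` and has no
neighbours in the columns of other parts that could create an earlier edge.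
-/

namespace EP

variable {V : Type}

/-- Local complementation of `G` at `v`. -/
def localComp (G : SimpleGraph V) (v : V) : SimpleGraph V where
  Adj x y := x ≠ y ∧
    ((G.Adj v x ∧ G.Adj v y ∧ ¬ G.Adj x y) ∨ (¬(G.Adj v x ∧ G.Adj v y) ∧ G.Adj x y))
  symm := by
    constructor
    intro x y h
    obtain ⟨hxy, h⟩ := h
    refine ⟨hxy.symm, ?_⟩
    rcases h with ⟨h1, h2, h3⟩ | ⟨h1, h2⟩
    · exact Or.inl ⟨h2, h1, fun h => h3 h.symm⟩
    · exact Or.inr ⟨fun h => h1 ⟨h.2, h.1⟩, h2.symm⟩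
  loopless := ⟨fun x h => h.1 rfl⟩

/-- `G'` is obtained from `G` by a sequence of local complementations at
vertices belonging to `Z`. -/
def LocEquivWithin (Z : Set V) (G G' : SimpleGraph V) : Prop :=
  Relation.ReflTransGen (fun A B => ∃ v ∈ Z, B = localComp A v) G G'

/-- The pair `(j₁, j₂)` is fixed with respect to the `c`-uniform chain `X` (of length `n`)
and the graph `G`: there is no edge between the `j₁`-th vertex of one part and the
`j₂`-th vertex of a different part. -/
def FixedPair (G : SimpleGraph V) {n c : ℕ} (X : Fin n → Fin c → V) (j₁ j₂ : Fin c) : Prop :=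
  ∀ i₁ i₂ : Fin n, i₁ ≠ i₂ → ¬ G.Adj (X i₁ j₁) (X i₂ j₂)

/-- The (0-based) position of the pair `(j₁, j₂)` in the lexicographic order on
`{(a, b) : a ≤ b}`: the number of such pairs strictly lexicographically smaller. -/
def pairIdx (c : ℕ) (j₁ j₂ : Fin c) : ℕ :=
  ((Finset.univ : Finset (Fin c × Fin c)).filter
    (fun p => p.1 ≤ p.2 ∧ (p.1 < j₁ ∨ (p.1 = j₁ ∧ p.2 < j₂)))).card

open Finset

section Rank

variable {α : Type*} [LinearOrder α]

lemma card_filter_lt_lt_of_lt {s : Finset α} {x y : α} (hx : x ∈ s) (hxy : x < y) :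
    #{z ∈ s | z < x} < #{z ∈ s | z < y} :=
  card_lt_card <| (ssubset_iff_of_subset
    fun _ hz => mem_filter.2 ⟨(mem_filter.1 hz).1, (mem_filter.1 hz).2.trans hxy⟩).2
      ⟨x, mem_filter.2 ⟨hx, hxy⟩, fun h => (mem_filter.1 h).2.false⟩

lemma exists_card_filter_lt_eq (s : Finset α) {l : ℕ} (hl : l < #s) :
    ∃ x ∈ s, #{z ∈ s | z < x} = l := by
  set e := s.orderEmbOfFin rfl
  have hfilter : {z ∈ s | z < e ⟨l, hl⟩} = (Iio ⟨l, hl⟩).map e.toEmbedding := by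
    ext z
    simp only [mem_filter, mem_map, mem_Iio, RelEmbedding.coe_toEmbedding]
    constructor
    · rintro ⟨hz, hlt⟩
      obtain ⟨i, rfl⟩ : z ∈ Set.range e := by rwa [range_orderEmbOfFin]
      exact ⟨i, e.lt_iff_lt.1 hlt, rfl⟩
    · rintro ⟨i, hi, rfl⟩
      exact ⟨orderEmbOfFin_mem _ _ _, e.lt_iff_lt.2 hi⟩
  exact ⟨e ⟨l, hl⟩, orderEmbOfFin_mem _ _ _, by rw [hfilter, card_map, Fin.card_Iio]⟩

end Rank

section PairIdx

variable {c : ℕ}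

def upperPairs (c : ℕ) : Finset (Fin c ×ₗ Fin c) := {p | (ofLex p).1 ≤ (ofLex p).2}

lemma pairIdx_eq_card (a b : Fin c) :
    pairIdx c a b = #{p ∈ upperPairs c | p < toLex (a, b)} := by
  simp only [pairIdx, Prod.Lex.lt_iff, ofLex_toLex, upperPairs, filter_filter]
  rfl

lemma card_upperPairs : #(upperPairs c) = c.choose 2 + c := by
  have h := Fintype.card_congr (Sym2.sortEquiv (α := Fin c))
  rw [Sym2.card, Fintype.card_subtype, Fintype.card_fin, Nat.choose_succ_succ,
    Nat.choose_one_right, add_comm] at h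
  exact h.symm

lemma pairIdx_lt_pairIdx {a b x y : Fin c} (hab : a ≤ b) (h : toLex (a, b) < toLex (x, y)) :
    pairIdx c a b < pairIdx c x y := by
  rw [pairIdx_eq_card, pairIdx_eq_card]
  exact card_filter_lt_lt_of_lt (by simpa [upperPairs] using hab) h

lemma toLex_le_of_pairIdx_le {a b x y : Fin c} (hxy : x ≤ y)
    (h : pairIdx c a b ≤ pairIdx c x y) : toLex (a, b) ≤ toLex (x, y) :=
  le_of_not_gt fun hlt => (pairIdx_lt_pairIdx hxy hlt).not_ge h

lemma exists_pairIdx_eq {l : ℕ} (hl : l < c.choose 2 + c) :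
    ∃ x y : Fin c, x ≤ y ∧ pairIdx c x y = l := by
  obtain ⟨p, hp, hpl⟩ := exists_card_filter_lt_eq (upperPairs c) (card_upperPairs ▸ hl)
  exact ⟨(ofLex p).1, (ofLex p).2, by simpa [upperPairs] using hp,
    by rw [pairIdx_eq_card]; exact hpl⟩

end PairIdx

section LocalComplementation

variable {Z Z' : Set V} {G G' : SimpleGraph V} {u v w x y : V}

lemma localComp_adj (hxy : x ≠ y) :
    (localComp G v).Adj x y ↔ Xor (G.Adj x y) (G.Adj v x ∧ G.Adj v y) := by
  simp only [localComp, xor_def]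
  tauto

def pivot (G : SimpleGraph V) (u w : V) : SimpleGraph V :=
  localComp (localComp (localComp G u) w) u

lemma pivot_adj (huw : G.Adj u w) (hxy : x ≠ y) (hxu : x ≠ u) (hxw : x ≠ w) (hyu : y ≠ u)
    (hyw : y ≠ w) :
    (pivot G u w).Adj x y ↔
      Xor (G.Adj x y) (Xor (G.Adj x u ∧ G.Adj y w) (G.Adj x w ∧ G.Adj y u)) := by
  simp only [pivot, localComp_adj hxy, localComp_adj hxu.symm, localComp_adj hyu.symm,
    localComp_adj hxw.symm, localComp_adj hyw.symm, localComp_adj huw.ne.symm]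
  grind [G.adj_comm u x, G.adj_comm u y, G.adj_comm w x, G.adj_comm w y, G.adj_comm w u,
    G.loopless.irrefl u]

lemma LocEquivWithin.tail_localComp (h : LocEquivWithin Z G G') (hv : v ∈ Z) :
    LocEquivWithin Z G (localComp G' v) :=
  h.tail ⟨v, hv, rfl⟩

lemma LocEquivWithin.tail_pivot (h : LocEquivWithin Z G G') (hu : u ∈ Z) (hw : w ∈ Z) :
    LocEquivWithin Z G (pivot G' u w) :=
  ((h.tail_localComp hu).tail_localComp hw).tail_localComp hu

lemma LocEquivWithin.mono (hZ : Z ⊆ Z') (h : LocEquivWithin Z G G') : LocEquivWithin Z' G G' :=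
  Relation.ReflTransGen.mono (fun _ _ ⟨v, hv, e⟩ => ⟨v, hZ hv, e⟩) _ _ h

end LocalComplementation

section Chain

variable {n c k : ℕ} {G : SimpleGraph V} {Y : Fin n → Fin c → V} {S T : Set (Fin n)}
  {a b j₁ j₂ : Fin c}

lemma chain_ne (hY : Function.Injective fun p : Fin n × Fin c => Y p.1 p.2) {i m : Fin n}
    (h : i ≠ m) (a b : Fin c) : Y i a ≠ Y m b :=
  fun he => h (congrArg Prod.fst (@hY (i, a) (m, b) he))

lemma chain_comp (hY : Function.Injective fun p : Fin n × Fin c => Y p.1 p.2) {m : ℕ}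
    {π : Fin m → Fin n} (hπ : Function.Injective π) :
    Function.Injective fun p : Fin m × Fin c => Y (π p.1) p.2 :=
  fun p q he => by
    obtain ⟨h₁, h₂⟩ := Prod.ext_iff.1 (@hY (π p.1, p.2) (π q.1, q.2) he)
    exact Prod.ext (hπ h₁) h₂

lemma mem_chainVerts_diff (hY : Function.Injective fun p : Fin n × Fin c => Y p.1 p.2)
    {τ : Fin k → Fin n} {i : Fin n} (hi : ∀ t, τ t ≠ i) (j : Fin c) :
    Y i j ∈ {v | (∃ i j, Y i j = v) ∧ ¬ ∃ t j, Y (τ t) j = v} :=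
  ⟨⟨i, j, rfl⟩, fun ⟨t, j', he⟩ => chain_ne hY (hi t) j' j he⟩

lemma pivot_chain_adj (hY : Function.Injective fun p : Fin n × Fin c => Y p.1 p.2)
    {i₀ i₁ p p' : Fin n} (huw : G.Adj (Y i₀ j₁) (Y i₁ j₂))
    (hp : p ∉ ({i₀, i₁} : Set (Fin n))) (hp' : p' ∉ ({i₀, i₁} : Set (Fin n))) (hne : p ≠ p') :
    (pivot G (Y i₀ j₁) (Y i₁ j₂)).Adj (Y p a) (Y p' b) ↔
      Xor (G.Adj (Y p a) (Y p' b))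
        (Xor (G.Adj (Y p a) (Y i₀ j₁) ∧ G.Adj (Y p' b) (Y i₁ j₂))
          (G.Adj (Y p a) (Y i₁ j₂) ∧ G.Adj (Y p' b) (Y i₀ j₁))) := by
  simp only [Set.mem_insert_iff, Set.mem_singleton_iff, not_or] at hp hp'
  exact pivot_adj huw (chain_ne hY hne _ _) (chain_ne hY hp.1 _ _) (chain_ne hY hp.2 _ _)
    (chain_ne hY hp'.1 _ _) (chain_ne hY hp'.2 _ _)

def FixedPairOn (G : SimpleGraph V) (Y : Fin n → Fin c → V) (S : Set (Fin n)) (a b : Fin c) :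
    Prop :=
  ∀ i₁ ∈ S, ∀ i₂ ∈ S, i₁ ≠ i₂ → ¬ G.Adj (Y i₁ a) (Y i₂ b)

/-- Unlike the hypothesis on `pairIdx`, this also covers pairs `(a, b)` with `a > b`. -/
def FixedBelowOn (G : SimpleGraph V) (Y : Fin n → Fin c → V) (S : Set (Fin n)) (j₁ j₂ : Fin c) :
    Prop :=
  ∀ a b : Fin c, toLex (a, b) < toLex (j₁, j₂) → FixedPairOn G Y S a b

lemma fixedPairOn_univ : FixedPairOn G Y Set.univ a b ↔ FixedPair G Y a b := by
  simp [FixedPairOn, FixedPair]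

lemma FixedPairOn.symm (h : FixedPairOn G Y S a b) : FixedPairOn G Y S b a :=
  fun i₁ h₁ i₂ h₂ hne hadj => h i₂ h₂ i₁ h₁ hne.symm hadj.symm

lemma FixedPairOn.fixedPair_comp (h : FixedPairOn G Y S a b) {τ : Fin k → Fin n}
    (hτ : Function.Injective τ) (hS : ∀ t, τ t ∈ S) : FixedPair G (fun t j => Y (τ t) j) a b :=
  fun t₁ t₂ hne => h _ (hS t₁) _ (hS t₂) (hτ.ne hne)

lemma FixedBelowOn.mono (hTS : T ⊆ S) (h : FixedBelowOn G Y S j₁ j₂) :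
    FixedBelowOn G Y T j₁ j₂ :=
  fun a b hab i₁ h₁ i₂ h₂ => h a b hab i₁ (hTS h₁) i₂ (hTS h₂)

lemma FixedBelowOn.comp {m : ℕ} {π : Fin m → Fin n} (hπ : Function.Injective π)
    (h : FixedBelowOn G Y S j₁ j₂) : FixedBelowOn G (fun i j => Y (π i) j) (π ⁻¹' S) j₁ j₂ :=
  fun a b hab _ h₁ _ h₂ hne => h a b hab _ h₁ _ h₂ (hπ.ne hne)

lemma FixedBelowOn.fixedPairOn_of_lt_fst (h : FixedBelowOn G Y S j₁ j₂) (ha : a < j₁)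
    (b : Fin c) : FixedPairOn G Y S a b :=
  h a b (Prod.Lex.toLex_lt_toLex.2 (Or.inl ha))

lemma FixedBelowOn.fixedPairOn_of_lt_snd (h : FixedBelowOn G Y S j₁ j₂) (hb : b < j₂) :
    FixedPairOn G Y S b j₁ :=
  (h j₁ b (Prod.Lex.toLex_lt_toLex.2 (Or.inr ⟨rfl, hb⟩))).symm

lemma fixedBelowOn_localComp (hY : Function.Injective fun p : Fin n × Fin c => Y p.1 p.2)
    (h : FixedBelowOn G Y S j₁ j₂) {i : Fin n} (hi : i ∈ S) :
    FixedBelowOn (localComp G (Y i j₁)) Y (S \ {i}) j₁ j₂ := by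
  intro a b hab p hp p' hp' hne
  have hold := h a b hab p hp.1 p' hp'.1 hne
  have hnew : ¬ (G.Adj (Y i j₁) (Y p a) ∧ G.Adj (Y i j₁) (Y p' b)) := by
    rcases Prod.Lex.toLex_lt_toLex.1 hab with ha | ⟨rfl, hb⟩
    · exact fun hv => h.fixedPairOn_of_lt_fst ha j₁ p hp.1 i hi hp.2 hv.1.symm
    · exact fun hv => h.fixedPairOn_of_lt_snd hb p' hp'.1 i hi hp'.2 hv.2.symm
  simp [localComp_adj (chain_ne hY hne _ _), hold, hnew]

lemma fixedBelowOn_pivot (hY : Function.Injective fun p : Fin n × Fin c => Y p.1 p.2)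
    (hj : j₁ < j₂) (h : FixedBelowOn G Y S j₁ j₂) {i₀ i₁ : Fin n} (hi₀ : i₀ ∈ S) (hi₁ : i₁ ∈ S)
    (huw : G.Adj (Y i₀ j₁) (Y i₁ j₂)) :
    FixedBelowOn (pivot G (Y i₀ j₁) (Y i₁ j₂)) Y (S \ {i₀, i₁}) j₁ j₂ := by
  intro a b hab p hp p' hp' hne
  have hold := h a b hab p hp.1 p' hp'.1 hne
  have hp₀ : p ≠ i₀ := fun e => hp.2 (Or.inl e)
  rw [pivot_chain_adj hY huw hp.2 hp'.2 hne]
  rcases Prod.Lex.toLex_lt_toLex.1 hab with ha | ⟨rfl, hb⟩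
  · have hxu := h.fixedPairOn_of_lt_fst ha j₁ p hp.1 i₀ hi₀ hp₀
    have hxw := h.fixedPairOn_of_lt_fst ha j₂ p hp.1 i₁ hi₁ fun e => hp.2 (Or.inr e)
    simp [hold, hxu, hxw]
  · have hxu := h.fixedPairOn_of_lt_snd hj p hp.1 i₀ hi₀ hp₀
    have hyu := h.fixedPairOn_of_lt_snd hb p' hp'.1 i₀ hi₀ fun e => hp'.2 (Or.inl e)
    simp [hold, hxu, hyu]

end Chain

section CanFixPair

variable {n c k : ℕ} {G : SimpleGraph V} {Y : Fin n → Fin c → V} {j₁ j₂ : Fin c}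

def CanFixPair (G : SimpleGraph V) (Y : Fin n → Fin c → V) (k : ℕ) (j₁ j₂ : Fin c) : Prop :=
  ∃ (G' : SimpleGraph V) (τ : Fin k → Fin n), StrictMono τ ∧
    LocEquivWithin {v | (∃ i j, Y i j = v) ∧ ¬ ∃ t j, Y (τ t) j = v} G G' ∧
    ∀ a b : Fin c, toLex (a, b) ≤ toLex (j₁, j₂) → FixedPair G' (fun t j => Y (τ t) j) a b

lemma CanFixPair.of_comp {m : ℕ} {e : Fin m → Fin n} (he : StrictMono e)
    (h : CanFixPair G (fun i j => Y (e i) j) k j₁ j₂) : CanFixPair G Y k j₁ j₂ := by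
  obtain ⟨G', τ, hτ, hloc, hfix⟩ := h
  refine ⟨G', e ∘ τ, he.comp hτ, hloc.mono ?_, hfix⟩
  rintro v ⟨⟨i, j, rfl⟩, hv⟩
  exact ⟨⟨e i, j, rfl⟩, hv⟩

lemma CanFixPair.of_rev (h : CanFixPair G (fun i j => Y i.rev j) k j₁ j₂) :
    CanFixPair G Y k j₁ j₂ := by
  obtain ⟨G', τ, hτ, hloc, hfix⟩ := h
  refine ⟨G', fun t => (τ t.rev).rev, fun a b hab => Fin.rev_lt_rev.2 (hτ (Fin.rev_lt_rev.2 hab)),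
    hloc.mono ?_, fun a b hab => ?_⟩
  · rintro v ⟨⟨i, j, rfl⟩, hv⟩
    exact ⟨⟨_, _, rfl⟩, fun ⟨t, j', he⟩ => hv ⟨t.rev, j', by simpa using he⟩⟩
  · exact (fixedPairOn_univ.2 (hfix a b hab)).fixedPair_comp Fin.rev_injective fun _ => trivial

lemma canFixPair_of_fixedPairOn {S : Set (Fin n)} {G' : SimpleGraph V} {τ : Fin k → Fin n}
    (hτ : StrictMono τ) (hS : ∀ t, τ t ∈ S)
    (hloc : LocEquivWithin {v | (∃ i j, Y i j = v) ∧ ¬ ∃ t j, Y (τ t) j = v} G G')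
    (hbelow : FixedBelowOn G' Y S j₁ j₂) (hpair : FixedPairOn G' Y S j₁ j₂) :
    CanFixPair G Y k j₁ j₂ := by
  refine ⟨G', τ, hτ, hloc, fun a b hab => ?_⟩
  have hab' : FixedPairOn G' Y S a b := by
    rcases hab.lt_or_eq with hlt | heq
    · exact hbelow a b hlt
    · obtain ⟨rfl, rfl⟩ := Prod.ext_iff.1 (toLex.injective heq)
      exact hpair
  exact hab'.fixedPair_comp hτ.injective hS

lemma canFixPair_of_fixedPairOn_univ (hk : k ≤ n) (h : FixedBelowOn G Y Set.univ j₁ j₂)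
    (h' : FixedPairOn G Y Set.univ j₁ j₂) : CanFixPair G Y k j₁ j₂ :=
  canFixPair_of_fixedPairOn (S := Set.univ) (Fin.strictMono_castLE hk) (fun _ => trivial) .refl h h'

lemma strictMono_add_const {d : ℕ} (h : k + d ≤ n) :
    StrictMono fun t : Fin k => (⟨t + d, by omega⟩ : Fin n) :=
  fun _ _ hab => Fin.mk_lt_mk.2 (Nat.add_lt_add_right hab d)

lemma canFixPair_of_clique (hY : Function.Injective fun p : Fin n × Fin c => Y p.1 p.2)
    (hk : k + 1 ≤ n) (h : FixedBelowOn G Y Set.univ j₁ j₁)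
    (hclique : ∀ p p', p ≠ p' → G.Adj (Y p j₁) (Y p' j₁)) : CanFixPair G Y k j₁ j₁ := by
  let i₀ : Fin n := ⟨0, by omega⟩
  have hτ : ∀ t : Fin k, (⟨t + 1, by omega⟩ : Fin n) ≠ i₀ := fun _ => by simp [i₀, Fin.ext_iff]
  refine canFixPair_of_fixedPairOn (S := Set.univ \ {i₀}) (strictMono_add_const hk)
    (fun t => ⟨trivial, hτ t⟩)
    (LocEquivWithin.tail_localComp .refl (mem_chainVerts_diff hY hτ j₁))
    (fixedBelowOn_localComp hY h trivial) fun p hp p' hp' hne => ?_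
  simp [localComp_adj (chain_ne hY hne _ _), hclique p p' hne, hclique i₀ p (Ne.symm hp.2),
    hclique i₀ p' (Ne.symm hp'.2)]

lemma canFixPair_of_completeBipartite
    (hY : Function.Injective fun p : Fin n × Fin c => Y p.1 p.2) (hj : j₁ < j₂) (hk : k + 2 ≤ n)
    (h : FixedBelowOn G Y Set.univ j₁ j₂)
    (hall : ∀ p p', p ≠ p' → G.Adj (Y p j₁) (Y p' j₂)) : CanFixPair G Y k j₁ j₂ := by
  let i₀ : Fin n := ⟨0, by omega⟩
  let i₁ : Fin n := ⟨1, by omega⟩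
  have huw : G.Adj (Y i₀ j₁) (Y i₁ j₂) := hall i₀ i₁ (by simp [i₀, i₁, Fin.ext_iff])
  have hτ₀ : ∀ t : Fin k, (⟨t + 2, by omega⟩ : Fin n) ≠ i₀ := fun _ => by simp [i₀, Fin.ext_iff]
  have hτ₁ : ∀ t : Fin k, (⟨t + 2, by omega⟩ : Fin n) ≠ i₁ := fun _ => by simp [i₁, Fin.ext_iff]
  refine canFixPair_of_fixedPairOn (S := Set.univ \ {i₀, i₁}) (strictMono_add_const hk)
    (fun t => ⟨trivial, by simp [hτ₀ t, hτ₁ t]⟩)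
    (LocEquivWithin.tail_pivot .refl (mem_chainVerts_diff hY hτ₀ j₁)
      (mem_chainVerts_diff hY hτ₁ j₂))
    (fixedBelowOn_pivot hY hj h trivial trivial huw) fun p hp p' hp' hne => ?_
  have hp₀ : p ≠ i₀ := fun e => hp.2 (Or.inl e)
  have hp₁ : p ≠ i₁ := fun e => hp.2 (Or.inr e)
  have hp'₀ : p' ≠ i₀ := fun e => hp'.2 (Or.inl e)
  have hxu := h.fixedPairOn_of_lt_snd hj p trivial i₀ trivial hp₀
  simp [pivot_chain_adj hY huw hp.2 hp'.2 hne, hall p p' hne, hall p i₁ hp₁, hxu,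
    G.adj_comm (Y p' j₂), hall i₀ p' (Ne.symm hp'₀)]

end CanFixPair

section HalfGraph

variable {c k : ℕ} {G : SimpleGraph V} {Y : Fin (3 * k) → Fin c → V} {j₁ j₂ : Fin c}

/-- The positions left after pivoting on `(3q, 3q + 2)` for every `q < r`. -/
def survivors (k r : ℕ) : Set (Fin (3 * k)) := {p | p.val % 3 = 1 ∨ 3 * r ≤ p.val}

def blockMid (k : ℕ) (t : Fin k) : Fin (3 * k) := ⟨3 * t + 1, by omega⟩

lemma blockMid_strictMono : StrictMono (blockMid k) :=
  fun _ _ hab => Fin.mk_lt_mk.2 (by have : _ < _ := hab; omega)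

def HalfGraphState (G : SimpleGraph V) (Y : Fin (3 * k) → Fin c → V) (j₁ j₂ : Fin c) (r : ℕ) :
    Prop :=
  FixedBelowOn G Y (survivors k r) j₁ j₂ ∧
    ∀ p ∈ survivors k r, ∀ p' ∈ survivors k r, p ≠ p' →
      (G.Adj (Y p j₁) (Y p' j₂) ↔ p.val < p'.val ∧ 3 * r ≤ p.val)

lemma halfGraphState_pivot (hY : Function.Injective fun p : Fin (3 * k) × Fin c => Y p.1 p.2)
    (hj : j₁ < j₂) {r : ℕ} (hr : r < k) (h : HalfGraphState G Y j₁ j₂ r) :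
    HalfGraphState (pivot G (Y ⟨3 * r, by omega⟩ j₁) (Y ⟨3 * r + 2, by omega⟩ j₂)) Y j₁ j₂
      (r + 1) := by
  obtain ⟨hbelow, hpat⟩ := h
  set i₀ : Fin (3 * k) := ⟨3 * r, by omega⟩
  set i₁ : Fin (3 * k) := ⟨3 * r + 2, by omega⟩
  have hi₀ : i₀ ∈ survivors k r := Or.inr le_rfl
  have hi₁ : i₁ ∈ survivors k r := Or.inr (Nat.le_add_right _ _)
  have hi₀₁ : i₀ ≠ i₁ := by simp [i₀, i₁, Fin.ext_iff]
  have huw : G.Adj (Y i₀ j₁) (Y i₁ j₂) := (hpat i₀ hi₀ i₁ hi₁ hi₀₁).2 ⟨by simp [i₀, i₁], le_rfl⟩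
  have hsub : survivors k (r + 1) ⊆ survivors k r \ {i₀, i₁} := by
    intro p hp
    simp only [survivors, Set.mem_ofPred_eq, Set.mem_sdiff, Set.mem_insert_iff,
      Set.mem_singleton_iff, Fin.ext_iff, i₀, i₁] at hp ⊢
    omega
  refine ⟨(fixedBelowOn_pivot hY hj hbelow hi₀ hi₁ huw).mono hsub, fun p hp p' hp' hne => ?_⟩
  obtain ⟨hpr, hp₀₁⟩ := hsub hp
  obtain ⟨hp'r, hp'₀₁⟩ := hsub hp'
  have hxu := hbelow.fixedPairOn_of_lt_snd hj p hpr i₀ hi₀ fun e => hp₀₁ (Or.inl e)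
  rw [pivot_chain_adj hY huw hp₀₁ hp'₀₁ hne, hpat p hpr p' hp'r hne,
    hpat p hpr i₁ hi₁ fun e => hp₀₁ (Or.inr e), G.adj_comm (Y p' j₂) (Y i₀ j₁),
    hpat i₀ hi₀ p' hp'r fun e => hp'₀₁ (Or.inl e.symm)]
  -- the pivot toggles exactly the edges from position `3r + 1` to the later positions
  have hne' := Fin.val_ne_of_ne hne
  have hv₀ : i₀.val = 3 * r := rfl
  have hv₁ : i₁.val = 3 * r + 2 := rfl
  simp only [survivors, Set.mem_ofPred_eq] at hp hp'
  simp only [hxu, false_and, xor_def, false_or, not_false_eq_true, and_true]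
  omega

lemma exists_locEquiv_halfGraphState
    (hY : Function.Injective fun p : Fin (3 * k) × Fin c => Y p.1 p.2) (hj : j₁ < j₂)
    (h₀ : HalfGraphState G Y j₁ j₂ 0) :
    ∀ r ≤ k, ∃ G', LocEquivWithin {v | (∃ i j, Y i j = v) ∧ ¬ ∃ t j, Y (blockMid k t) j = v}
      G G' ∧ HalfGraphState G' Y j₁ j₂ r
  | 0, _ => ⟨G, .refl, h₀⟩
  | r + 1, hr => by
    obtain ⟨G', hloc, hG'⟩ := exists_locEquiv_halfGraphState hY hj h₀ r (by omega)
    have hu : ∀ t, blockMid k t ≠ ⟨3 * r, by omega⟩ := fun t => by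
      simp only [blockMid, ne_eq, Fin.ext_iff]; omega
    have hw : ∀ t, blockMid k t ≠ ⟨3 * r + 2, by omega⟩ := fun t => by
      simp only [blockMid, ne_eq, Fin.ext_iff]; omega
    exact ⟨_, hloc.tail_pivot (mem_chainVerts_diff hY hu j₁) (mem_chainVerts_diff hY hw j₂),
      halfGraphState_pivot hY hj (by omega) hG'⟩

lemma canFixPair_of_halfGraph
    (hY : Function.Injective fun p : Fin (3 * k) × Fin c => Y p.1 p.2) (hj : j₁ < j₂)
    (h : FixedBelowOn G Y Set.univ j₁ j₂)
    (hpat : ∀ p p', p ≠ p' → (G.Adj (Y p j₁) (Y p' j₂) ↔ p < p')) : CanFixPair G Y k j₁ j₂ := by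
  obtain ⟨G', hloc, hbelow, hpat'⟩ := exists_locEquiv_halfGraphState hY hj
    ⟨h.mono (Set.subset_univ _), fun p _ p' _ hne => by
      simp only [hpat p p' hne, Nat.mul_zero, Nat.zero_le, and_true]; rfl⟩ k le_rfl
  refine canFixPair_of_fixedPairOn blockMid_strictMono
    (fun t => Or.inl (by simp [blockMid])) hloc hbelow fun p hp p' hp' hne => ?_
  rw [hpat' p hp p' hp' hne]
  omega

end HalfGraph

section Homogeneous

lemma exists_strictMono_homogeneous {R m : ℕ}
    (hR : ∀ f : Fin R → Fin R → Fin 4, (∀ x y, f x y = f y x) →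
      ∃ (col : Fin 4) (s : Finset (Fin R)), s.card = m ∧
        ∀ x ∈ s, ∀ y ∈ s, x ≠ y → f x y = col)
    (P : Fin R → Fin R → Prop) :
    ∃ (e : Fin m → Fin R) (E₁ E₂ : Prop), StrictMono e ∧
      ∀ p p', p < p' → (P (e p) (e p') ↔ E₁) ∧ (P (e p') (e p) ↔ E₂) := by
  classical
  let code : Bool × Bool ≃ Fin 4 := Fintype.equivFinOfCardEq rfl
  let f : Fin R → Fin R → Fin 4 := fun x y =>
    code (if x < y then (P x y, P y x) else (P y x, P x y))
  have hf : ∀ x y, f x y = f y x := by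
    intro x y
    rcases lt_trichotomy x y with h | rfl | h
    · simp [f, h, h.not_gt]
    · rfl
    · simp [f, h, h.not_gt]
  obtain ⟨col, s, hs, hcol⟩ := hR f hf
  let e := s.orderEmbOfFin hs
  refine ⟨e, (code.symm col).1, (code.symm col).2, e.strictMono, fun p p' hpp => ?_⟩
  have h := hcol _ (orderEmbOfFin_mem _ _ _) _ (orderEmbOfFin_mem _ _ _) (e.strictMono hpp).ne
  rw [← h, Equiv.symm_apply_apply]
  simp [e, hpp]

variable {c k : ℕ} {G : SimpleGraph V} {Y : Fin (3 * k) → Fin c → V} {j₁ j₂ : Fin c}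

lemma canFixPair_of_homogeneous
    (hY : Function.Injective fun p : Fin (3 * k) × Fin c => Y p.1 p.2) (hj : j₁ ≤ j₂)
    (h : FixedBelowOn G Y Set.univ j₁ j₂) {E₁ E₂ : Prop}
    (hE : ∀ p p', p < p' → (G.Adj (Y p j₁) (Y p' j₂) ↔ E₁) ∧ (G.Adj (Y p' j₁) (Y p j₂) ↔ E₂)) :
    CanFixPair G Y k j₁ j₂ := by
  have hpat : ∀ p p', p ≠ p' → (G.Adj (Y p j₁) (Y p' j₂) ↔ p < p' ∧ E₁ ∨ p' < p ∧ E₂) := by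
    intro p p' hne
    rcases hne.lt_or_gt with hlt | hlt
    · simp [(hE p p' hlt).1, hlt, hlt.not_gt]
    · simp [(hE p' p hlt).2, hlt, hlt.not_gt]
  have hall (h₁ : E₁) (h₂ : E₂) : ∀ p p', p ≠ p' → G.Adj (Y p j₁) (Y p' j₂) :=
    fun p p' hne => (hpat p p' hne).2 (hne.lt_or_gt.imp (⟨·, h₁⟩) (⟨·, h₂⟩))
  have hnone (h₁ : ¬ E₁) (h₂ : ¬ E₂) : CanFixPair G Y k j₁ j₂ :=
    canFixPair_of_fixedPairOn_univ (by omega) h fun p _ p' _ hne => by simp [hpat p p' hne, h₁, h₂]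
  rcases Nat.eq_zero_or_pos k with rfl | hk
  · exact canFixPair_of_fixedPairOn_univ le_rfl h fun p => p.elim0
  rcases hj.lt_or_eq with hj | rfl
  · by_cases h₁ : E₁ <;> by_cases h₂ : E₂
    · exact canFixPair_of_completeBipartite hY hj (by omega) h (hall h₁ h₂)
    · exact canFixPair_of_halfGraph hY hj h fun p p' hne => by simp [hpat p p' hne, h₁, h₂]
    · refine CanFixPair.of_rev (canFixPair_of_halfGraph (chain_comp hY Fin.rev_injective) hj
        (h.comp Fin.rev_injective) fun p p' hne => ?_)
      simp [hpat _ _ (Fin.rev_injective.ne hne), h₁, h₂]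
    · exact hnone h₁ h₂
  · have h₁₂ : E₁ ↔ E₂ := by
      have h01 := hE ⟨0, by omega⟩ ⟨1, by omega⟩ (by simp [Fin.lt_def])
      rw [← h01.1, ← h01.2, G.adj_comm]
    by_cases h₁ : E₁
    · exact canFixPair_of_clique hY (by omega) h (hall h₁ (h₁₂.1 h₁))
    · exact hnone h₁ (mt h₁₂.2 h₁)

end Homogeneous

lemma fixedBelowOn_univ_of_pairIdx_lt {n c : ℕ} {G : SimpleGraph V} {X : Fin n → Fin c → V}
    {j₁ j₂ : Fin c}
    (hfix : ∀ a b : Fin c, a ≤ b → pairIdx c a b < pairIdx c j₁ j₂ → FixedPair G X a b) :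
    FixedBelowOn G X Set.univ j₁ j₂ := by
  intro a b hab
  rcases le_or_gt a b with hle | hlt
  · exact fixedPairOn_univ.2 (hfix a b hle (pairIdx_lt_pairIdx hle hab))
  · have ha : a ≤ j₁ := (Prod.Lex.toLex_lt_toLex.1 hab).elim le_of_lt fun h => h.1.le
    have hba : toLex (b, a) < toLex (j₁, j₂) := Prod.Lex.toLex_lt_toLex.2 (Or.inl (hlt.trans_le ha))
    exact (fixedPairOn_univ.2 (hfix b a hlt.le (pairIdx_lt_pairIdx hlt.le hba))).symm

theorem fix_next_pair_general {V : Type} (c k l R : ℕ)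
    (hl : l < Nat.choose c 2 + c)
    (hR : ∀ f : Fin R → Fin R → Fin 4, (∀ x y, f x y = f y x) →
      ∃ (col : Fin 4) (s : Finset (Fin R)), s.card = 3 * k ∧
        ∀ x ∈ s, ∀ y ∈ s, x ≠ y → f x y = col)
    (G : SimpleGraph V) (X : Fin R → Fin c → V)
    (hchain : Function.Injective fun p : Fin R × Fin c => X p.1 p.2)
    (hfix : ∀ j₁ j₂ : Fin c, j₁ ≤ j₂ → pairIdx c j₁ j₂ < l → FixedPair G X j₁ j₂) :
    ∃ (Gt : SimpleGraph V) (σ : Fin k → Fin R), StrictMono σ ∧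
      LocEquivWithin
        {v | (∃ i j, X i j = v) ∧ ¬ ∃ i j, X (σ i) j = v} G Gt ∧
      ∀ j₁ j₂ : Fin c, j₁ ≤ j₂ → pairIdx c j₁ j₂ < l + 1 →
        FixedPair Gt (fun i j => X (σ i) j) j₁ j₂ := by
  obtain ⟨j₁, j₂, hj, rfl⟩ := exists_pairIdx_eq hl
  obtain ⟨e, E₁, E₂, he, hE⟩ :=
    exists_strictMono_homogeneous hR fun x y => G.Adj (X x j₁) (X y j₂)
  obtain ⟨Gt, σ, hσ, hloc, hfixed⟩ :=
    (canFixPair_of_homogeneous (chain_comp hchain he.injective) hj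
      ((fixedBelowOn_univ_of_pairIdx_lt hfix).comp he.injective) hE).of_comp he
  exact ⟨Gt, σ, hσ, hloc, fun a b _ hab => hfixed a b (toLex_le_of_pairIdx_le hj (by omega))⟩

/-- Let `0 ≤ l < C(c,2) + c` and let `R` satisfy the 4-colour Ramsey
property for monochromatic sets of size `3k`. If `X` is a `c`-uniform chain of length `R`
in `G` whose first `l` pairs (in lexicographic order) are fixed, then by locally
complementing only at vertices of `V(X) \ V(Y)` one can reach a graph `G~` together with a
subchain `Y` of `X` of length `k` whose first `l + 1` pairs are fixed. -/
theorem fix_next_pair {V : Type} [Fintype V] (c k l R : ℕ)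
    (hl : l < Nat.choose c 2 + c)
    (hR : ∀ f : Fin R → Fin R → Fin 4, (∀ x y, f x y = f y x) →
      ∃ (col : Fin 4) (s : Finset (Fin R)), s.card = 3 * k ∧
        ∀ x ∈ s, ∀ y ∈ s, x ≠ y → f x y = col)
    (G : SimpleGraph V) (X : Fin R → Fin c → V)
    (hchain : Function.Injective fun p : Fin R × Fin c => X p.1 p.2)
    (hfix : ∀ j₁ j₂ : Fin c, j₁ ≤ j₂ → pairIdx c j₁ j₂ < l → FixedPair G X j₁ j₂) :
    ∃ (Gt : SimpleGraph V) (σ : Fin k → Fin R), StrictMono σ ∧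
      LocEquivWithin
        {v | (∃ i j, X i j = v) ∧ ¬ ∃ i j, X (σ i) j = v} G Gt ∧
      ∀ j₁ j₂ : Fin c, j₁ ≤ j₂ → pairIdx c j₁ j₂ < l + 1 →
        FixedPair Gt (fun i j => X (σ i) j) j₁ j₂ :=
  fix_next_pair_general c k l R hl hR G X hchain hfix

end EP
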